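/- Let Σ be a real symmetric positive definite 2n×2n matrix (n = n_A + n_B) and ħ > 0, and suppose that the covariance ellipsoid Ω = {z ∈ ℝ^{2n} : ⟨Σ⁻¹ z, z⟩ ≤ 2} contains the ball B^{2n}(√ħ). Then the Werner–Wolf separability condition holds for Σ: there exist real symmetric matrices Σ_A and Σ_B with Σ_A + (iħ/2)J_{n_A} ≥ 0, Σ_B + (iħ/2)J_{n_B} ≥ 0, and Σ − (Σ_A ⊕ Σ_B) positive semidefinite (one may take Σ_A ⊕ Σ_B = (ħ/2)I_{2n}); hence the Gaussian state with covariance matrix Σ is separable for all partitions (A, B). -/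

import Mathlib

open Matrix
open scoped ComplexOrder

noncomputable section

/-- The phase space index type for `ℝ^{2m}`, split as positions ⊕ momenta. -/
abbrev PS (m : ℕ) := Fin m ⊕ Fin m

/-- The standard symplectic matrix `J_m = [[0, I_m], [-I_m, 0]]`. -/
def symplJ (m : ℕ) : Matrix (PS m) (PS m) ℝ := Matrix.fromBlocks 0 1 (-1) 0

/-- `S ∈ Sp(m)`: `Sᵀ J_m S = J_m`. -/
def IsSymplectic {m : ℕ} (S : Matrix (PS m) (PS m) ℝ) : Prop :=
  Sᵀ * symplJ m * S = symplJ m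

/-- The quantum condition `Σ + (i·hbar/2) J_m ≥ 0`, i.e. the complex Hermitian matrix
`Σ + (i·hbar/2) J_m` is positive semidefinite. -/
def QuantumCond (m : ℕ) (hbar : ℝ) (Sig : Matrix (PS m) (PS m) ℝ) : Prop :=
  (Sig.map Complex.ofReal + (hbar / 2 : ℝ) • Complex.I • (symplJ m).map Complex.ofReal).PosSemidef

/-- `μ ∈ ℂ` is an eigenvalue of the real matrix `N` (viewed as a complex matrix). -/
def IsEigenvalue {ι : Type} [Fintype ι] [DecidableEq ι] (N : Matrix ι ι ℝ) (μ : ℂ) : Prop :=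
  (N.map Complex.ofReal - μ • 1).det = 0

lemma symplJ_sq (m : ℕ) : symplJ m * symplJ m = -1 := by
  have : (-1 : Matrix (PS m) (PS m) ℝ) = Matrix.fromBlocks (-1) 0 0 (-1) := by
    rw [← Matrix.fromBlocks_one]
    ext i j
    cases i <;> cases j <;> simp [Matrix.fromBlocks]
  rw [this]
  simp [symplJ, Matrix.fromBlocks_multiply]

lemma quantumCond_smul_one (m : ℕ) (hbar : ℝ) (hhb : 0 ≤ hbar) :
    QuantumCond m hbar ((hbar / 2) • 1) := by
  set K : Matrix (PS m) (PS m) ℂ := Complex.I • (symplJ m).map Complex.ofReal with hK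
  have hKherm : Kᴴ = K := by
    rw [hK, Matrix.conjTranspose_smul]
    have : ((symplJ m).map Complex.ofReal)ᴴ = -((symplJ m).map Complex.ofReal) := by
      ext i j
      simp [symplJ, Matrix.conjTranspose_apply, Matrix.fromBlocks]
      cases i <;> cases j <;> simp [Matrix.one_apply, eq_comm]
    rw [this]
    simp
  have hJc : (symplJ m).map Complex.ofReal * (symplJ m).map Complex.ofReal = -1 := by
    have h1 : ((symplJ m).map Complex.ofReal) * ((symplJ m).map Complex.ofReal)
        = (symplJ m * symplJ m).map Complex.ofReal := by
      ext i j
      simp [Matrix.mul_apply, Matrix.map_apply]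
    rw [h1, symplJ_sq]
    ext i j
    simp [Matrix.map_apply, Matrix.one_apply]
    split <;> simp
  have hKK : K * K = 1 := by
    rw [hK, Matrix.smul_mul, Matrix.mul_smul, hJc, smul_smul, Complex.I_mul_I]
    simp
  set M : Matrix (PS m) (PS m) ℂ := 1 + K with hM
  have hMherm : M.IsHermitian := by
    rw [Matrix.IsHermitian, hM, Matrix.conjTranspose_add, Matrix.conjTranspose_one, hKherm]
  have hMM : Mᴴ * M = (2:ℂ) • M := by
    rw [hMherm, hM, add_mul, mul_add, mul_add, hKK, two_smul]
    simp only [one_mul, mul_one]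
    abel
  have h2inv : (0:ℂ) ≤ 2⁻¹ := by
    rw [(by norm_num : ((2:ℂ))⁻¹ = ((2⁻¹:ℝ):ℂ))]
    exact Complex.zero_le_real.mpr (by norm_num)
  have hMpsd : M.PosSemidef := by
    have h := Matrix.posSemidef_conjTranspose_mul_self M
    rw [hMM] at h
    refine .of_dotProduct_mulVec_nonneg hMherm fun x => ?_
    have h1 := h.dotProduct_mulVec_nonneg x
    rw [Matrix.smul_mulVec, dotProduct_smul] at h1
    have h3 := mul_nonneg h2inv h1
    rw [smul_eq_mul, ← mul_assoc] at h3
    norm_num at h3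
    exact h3
  have heq : (((hbar / 2) • (1 : Matrix (PS m) (PS m) ℝ)).map Complex.ofReal
      + (hbar / 2 : ℝ) • Complex.I • (symplJ m).map Complex.ofReal)
      = ((hbar / 2 : ℝ) : ℂ) • M := by
    rw [hM]
    ext i j
    by_cases h : i = j <;>
      simp [hK, Matrix.map_apply, Matrix.one_apply, h, Complex.real_smul,
        Matrix.smul_apply, Matrix.add_apply, mul_add] <;> ring
  rw [QuantumCond, heq]
  refine .of_dotProduct_mulVec_nonneg ?_ fun x => ?_
  · rw [Matrix.IsHermitian, Matrix.conjTranspose_smul, hMherm]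
    congr 1
    simp [Complex.star_def, Complex.conj_ofReal]
  · rw [Matrix.smul_mulVec, dotProduct_smul, smul_eq_mul]
    exact mul_nonneg (Complex.zero_le_real.mpr (by positivity)) (hMpsd.dotProduct_mulVec_nonneg x)

/-- if the covariance ellipsoid `Ω = {z : ⟨Σ⁻¹z, z⟩ ≤ 2}` contains the ball
`B^{2n}(√hbar)`, then the Werner–Wolf separability condition holds for `Σ`
(one may take `Σ_A ⊕ Σ_B = (hbar/2)·I`); hence the Gaussian state with covariance matrix
`Σ` is separable for all partitions `(A,B)`. -/
theorem statement7 (nA nB : ℕ) (hA : 0 < nA) (hB : 0 < nB) (hbar : ℝ) (hhb : 0 < hbar)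
    (Sig : Matrix (PS nA ⊕ PS nB) (PS nA ⊕ PS nB) ℝ) (hsym : Sig.IsSymm) (hpos : Sig.PosDef)
    (hball : {z : PS nA ⊕ PS nB → ℝ | z ⬝ᵥ z ≤ hbar} ⊆
      {z : PS nA ⊕ PS nB → ℝ | (Sig⁻¹ *ᵥ z) ⬝ᵥ z ≤ 2}) :
    ∃ (SigA : Matrix (PS nA) (PS nA) ℝ) (SigB : Matrix (PS nB) (PS nB) ℝ),
      SigA.IsSymm ∧ SigB.IsSymm ∧
      QuantumCond nA hbar SigA ∧ QuantumCond nB hbar SigB ∧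
      (Sig - Matrix.fromBlocks SigA 0 0 SigB).PosSemidef ∧
      Matrix.fromBlocks SigA 0 0 SigB = (hbar / 2) • (1 : Matrix (PS nA ⊕ PS nB) (PS nA ⊕ PS nB) ℝ) := by
  have hblk : Matrix.fromBlocks ((hbar/2) • (1 : Matrix (PS nA) (PS nA) ℝ)) 0 0
      ((hbar/2) • (1 : Matrix (PS nB) (PS nB) ℝ))
      = (hbar / 2) • (1 : Matrix (PS nA ⊕ PS nB) (PS nA ⊕ PS nB) ℝ) := by
    ext i j
    cases i <;> cases j <;>
      simp [Matrix.fromBlocks, Matrix.one_apply, Matrix.smul_apply]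
  have hdet : IsUnit Sig.det := hpos.det_pos.ne'.isUnit
  -- key inequality from the ball containment
  have hinv : ∀ x : PS nA ⊕ PS nB → ℝ,
      hbar * ((Sig⁻¹ *ᵥ x) ⬝ᵥ x) ≤ 2 * (x ⬝ᵥ x) := by
    intro x
    by_cases hx : x = 0
    · simp [hx]
    · have hnn : 0 ≤ x ⬝ᵥ x := by
        rw [dotProduct]
        exact Finset.sum_nonneg fun i _ => mul_self_nonneg _
      have hs : 0 < x ⬝ᵥ x := by
        rcases lt_or_eq_of_le hnn with h | h
        · exact h
        · exact absurd (dotProduct_self_eq_zero.mp h.symm) hx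
      set s := x ⬝ᵥ x with hsdef
      set c := Real.sqrt (hbar / s) with hc
      have hcc : c * c = hbar / s := Real.mul_self_sqrt (by positivity)
      have hz : (c • x) ⬝ᵥ (c • x) = hbar := by
        rw [smul_dotProduct, dotProduct_smul, smul_eq_mul, smul_eq_mul,
          ← mul_assoc, hcc]
        field_simp
        exact hsdef.symm
      have hmem : (c • x) ∈ {z : PS nA ⊕ PS nB → ℝ | z ⬝ᵥ z ≤ hbar} := le_of_eq hz
      have h2 := hball hmem
      rw [Set.mem_setOf_eq, Matrix.mulVec_smul, smul_dotProduct,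
        dotProduct_smul, smul_eq_mul, smul_eq_mul, ← mul_assoc, hcc] at h2
      have h3 := mul_le_mul_of_nonneg_right h2 hs.le
      calc hbar * ((Sig⁻¹ *ᵥ x) ⬝ᵥ x) = hbar / s * ((Sig⁻¹ *ᵥ x) ⬝ᵥ x) * s := by
            field_simp
        _ ≤ 2 * s := h3
  refine ⟨(hbar / 2) • 1, (hbar / 2) • 1, (Matrix.isSymm_one).smul _,
    (Matrix.isSymm_one).smul _, quantumCond_smul_one nA hbar hhb.le,
    quantumCond_smul_one nB hbar hhb.le, ?_, hblk⟩
  rw [hblk]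
  refine .of_dotProduct_mulVec_nonneg ?_ ?_
  · rw [Matrix.IsHermitian]
    ext i j
    simp [Matrix.conjTranspose_apply, Matrix.sub_apply, Matrix.smul_apply, Matrix.one_apply,
      hsym.apply, eq_comm]
  · intro x
    have hstar : star x = x := star_trivial x
    rw [hstar]
    set w := Sig⁻¹ *ᵥ x with hwdef
    have hw : Sig *ᵥ w = x := by
      rw [hwdef, Matrix.mulVec_mulVec, Matrix.mul_nonsing_inv _ hdet, Matrix.one_mulVec]
    have h4 : w ᵥ* Sig = Sig *ᵥ w := by
      rw [← Matrix.transpose_transpose Sig, Matrix.vecMul_transpose,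
        Matrix.transpose_transpose, hsym.eq]
    have hws : w ⬝ᵥ (Sig *ᵥ x) = x ⬝ᵥ x := by
      rw [Matrix.dotProduct_mulVec, h4, hw]
    set v := x - (hbar/2) • w with hv
    have h0 := hpos.posSemidef.dotProduct_mulVec_nonneg v
    rw [star_trivial] at h0
    have hSv : Sig *ᵥ v = Sig *ᵥ x - (hbar/2) • x := by
      rw [hv, Matrix.mulVec_sub, Matrix.mulVec_smul, hw]
    rw [hSv, hv] at h0
    simp only [sub_dotProduct, dotProduct_sub, smul_dotProduct,
      dotProduct_smul, smul_eq_mul] at h0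
    rw [hws] at h0
    have h5 := hinv x
    rw [← hwdef] at h5
    rw [Matrix.sub_mulVec, Matrix.smul_mulVec, Matrix.one_mulVec,
      dotProduct_sub, dotProduct_smul, smul_eq_mul]
    nlinarith [h0, h5, hhb, mul_le_mul_of_nonneg_left h5 (le_of_lt hhb)]
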